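/- arXiv:1103.2204 — 3 statements merged into one kernel-verified Lean document; each statement's English description precedes it below -/
import Mathlib

section
/- For every integer i and every natural number n ≥ 0, the quotient {i}_{q,n} / {n}_q! is a Laurent polynomial, i.e., lies in ℤ[q,q^{-1}]. -/
/-!
The quotient `B(i, n) = {i}_{q,n} / {n}_q!` obeys the q-Pascal rule
`B(i + 1, n + 1) = q^{i-n} B(i, n) + B(i, n + 1)`, which comes from splitting the new numerator
factor as `q^{i+1} - 1 = q^{i-n} (q^{n+1} - 1) + (q^{i-n} - 1)`. Together with `B(i, 0) = 1` and
`B(0, n + 1) = 0`, induction on `n`, and inside it on `i` in both directions, shows that every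
`B(i, n)` is a `ℤ`-polynomial in `q` and `q⁻¹`.
-/

open Finset Polynomial

section QBinom

variable {K : Type*} [Field K] (q : K)

noncomputable def qFalling (i : ℤ) (n : ℕ) : K :=
  ∏ t ∈ range n, (q ^ (i - (t : ℤ)) - 1)

noncomputable def qFactorial (n : ℕ) : K :=
  ∏ t ∈ range n, (q ^ ((t : ℤ) + 1) - 1)

noncomputable def qBinom (i : ℤ) (n : ℕ) : K :=
  qFalling q i n / qFactorial q n

lemma qFalling_succ (i : ℤ) (n : ℕ) :
    qFalling q i (n + 1) = qFalling q i n * (q ^ (i - (n : ℤ)) - 1) :=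
  prod_range_succ _ _

lemma qFalling_succ_succ (i : ℤ) (n : ℕ) :
    qFalling q (i + 1) (n + 1) = qFalling q i n * (q ^ (i + 1) - 1) := by
  rw [qFalling, prod_range_succ']
  congr 1
  · exact prod_congr rfl fun t _ => by push_cast; ring_nf
  · simp

lemma qFactorial_succ (n : ℕ) :
    qFactorial q (n + 1) = qFactorial q n * (q ^ ((n : ℤ) + 1) - 1) :=
  prod_range_succ _ _

variable {q}

lemma zpow_natCast_add_one_sub_one_ne_zero (hq : ¬IsOfFinOrder q) (n : ℕ) :
    q ^ ((n : ℤ) + 1) - 1 ≠ 0 := by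
  rw [sub_ne_zero, ← Nat.cast_succ, zpow_natCast]
  exact fun h => hq (isOfFinOrder_iff_pow_eq_one.mpr ⟨n + 1, n.succ_pos, h⟩)

lemma qFactorial_ne_zero (hq : ¬IsOfFinOrder q) (n : ℕ) : qFactorial q n ≠ 0 :=
  prod_ne_zero_iff.mpr fun t _ => zpow_natCast_add_one_sub_one_ne_zero hq t

@[simp]
lemma qBinom_zero_right (i : ℤ) : qBinom q i 0 = 1 := by
  simp [qBinom, qFalling, qFactorial]

lemma qBinom_zero_succ (n : ℕ) : qBinom q 0 (n + 1) = 0 := by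
  rw [qBinom, qFalling, prod_eq_zero (mem_range.mpr n.succ_pos) (by simp), zero_div]

lemma qBinom_succ_succ (hq0 : q ≠ 0) (hq : ¬IsOfFinOrder q) (i : ℤ) (n : ℕ) :
    qBinom q (i + 1) (n + 1) = q ^ (i - n) * qBinom q i n + qBinom q i (n + 1) := by
  have hsplit : q ^ (i + 1) - 1 = q ^ (i - n) * (q ^ ((n : ℤ) + 1) - 1) + (q ^ (i - n) - 1) := by
    rw [mul_sub, ← zpow_add₀ hq0, show i - n + (n + 1) = i + 1 by ring]
    ring
  have hfac := qFactorial_ne_zero hq n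
  have hlast := zpow_natCast_add_one_sub_one_ne_zero hq n
  rw [qBinom, qBinom, qBinom, qFalling_succ_succ, qFalling_succ, qFactorial_succ, hsplit]
  field_simp

lemma zpow_mem_adjoin_inv (R : Type*) [CommSemiring R] [Algebra R K] (k : ℤ) :
    q ^ k ∈ Algebra.adjoin R ({q, q⁻¹} : Set K) := by
  obtain ⟨m, rfl | rfl⟩ := Int.eq_nat_or_neg k
  · rw [zpow_natCast]
    exact pow_mem (Algebra.subset_adjoin (Set.mem_insert q {q⁻¹})) m
  · rw [zpow_neg, ← inv_zpow, zpow_natCast]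
    exact pow_mem (Algebra.subset_adjoin (Set.mem_insert_of_mem q (Set.mem_singleton q⁻¹))) m

theorem qBinom_mem_adjoin (R : Type*) [CommRing R] [Algebra R K] (hq0 : q ≠ 0)
    (hq : ¬IsOfFinOrder q) (i : ℤ) (n : ℕ) :
    qBinom q i n ∈ Algebra.adjoin R ({q, q⁻¹} : Set K) := by
  induction n generalizing i with
  | zero => simp [one_mem]
  | succ n ihn =>
    induction i using Int.induction_on with
    | zero => simp [qBinom_zero_succ, zero_mem]
    | succ j ihj =>
      rw [qBinom_succ_succ hq0 hq]
      exact add_mem (mul_mem (zpow_mem_adjoin_inv R _) (ihn _)) ihj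
    | pred j ihj =>
      have hpascal := qBinom_succ_succ hq0 hq (-j - 1) n
      rw [sub_add_cancel] at hpascal
      rw [eq_sub_of_add_eq' hpascal.symm]
      exact sub_mem ihj (mul_mem (zpow_mem_adjoin_inv R _) (ihn _))

end QBinom

lemma RatFunc.not_isOfFinOrder_X {K : Type*} [Field K] :
    ¬IsOfFinOrder (RatFunc.X : RatFunc K) := by
  intro hX
  obtain ⟨n, hn, hXn⟩ := isOfFinOrder_iff_pow_eq_one.mp hX
  rw [← RatFunc.algebraMap_X, ← map_pow, ← map_one (algebraMap K[X] (RatFunc K))] at hXn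
  have := congrArg natDegree (RatFunc.algebraMap_injective K hXn)
  simp only [natDegree_X_pow, natDegree_one] at this
  omega

/-- For `i ∈ ℤ` and `n ∈ ℕ`, the q-binomial coefficient
`{i}_{q,n} / {n}_q! = (∏_{t=0}^{n-1} (q^{i-t} − 1)) / (∏_{t=1}^{n} (q^t − 1))`,
taken in `ℚ(q)`, lies in `ℤ[q, q⁻¹]`. -/
theorem qbinom_mem_laurent (i : ℤ) (n : ℕ) :
    (∏ t ∈ Finset.range n, ((RatFunc.X : RatFunc ℚ) ^ (i - (t : ℤ)) - 1)) /
      (∏ t ∈ Finset.range n, ((RatFunc.X : RatFunc ℚ) ^ ((t : ℤ) + 1) - 1)) ∈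
      Algebra.adjoin ℤ ({RatFunc.X, RatFunc.X⁻¹} : Set (RatFunc ℚ)) :=
  qBinom_mem_adjoin ℤ RatFunc.X_ne_zero RatFunc.not_isOfFinOrder_X i n
end

section
/- Let k ≥ 1, let L ≥ 0, and for each p = 1,…,L let s_p ≥ 0 be given together with two finite tuples of natural numbers (i_{p,0,1},…,i_{p,0,m_p}) and (i_{p,1,1},…,i_{p,1,n_p}), each summing to s_p. Let P denote the disjoint union of all these index positions with weight i_a at position a, and let M be any set of pairwise disjoint unordered pairs of elements of P. Then ∑_{p=1}^{L} ⌊s_p/k⌋ ≥ ∑_{{a,b}∈M} ⌊min(i_a, i_b)/k⌋. -/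
lemma sum_div_le_div_sum {α : Type*} (S : Finset α) (f : α → ℕ) (k : ℕ) (hk : 1 ≤ k) :
    ∑ i ∈ S, f i / k ≤ (∑ i ∈ S, f i) / k := by
  rw [Nat.le_div_iff_mul_le hk, Finset.sum_mul]
  exact Finset.sum_le_sum fun i _ => Nat.div_mul_le_self _ _

/-- Let `k ≥ 1`.  For each `p = 1,…,L` let `s p` be given together with two tuples of
natural numbers (of lengths `m p` and `n p`), each summing to `s p`.  Positions are
elements of `P = Σ p, Fin (m p) ⊕ Fin (n p)`, with weight `w a` at position `a`.
If `M` is a set of pairwise disjoint (unordered) pairs of positions, then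
`∑_p ⌊s_p/k⌋ ≥ ∑_{{a,b} ∈ M} ⌊min(w a, w b)/k⌋`. -/
theorem sum_floor_div_ge_sum_min_floor_div
    (k : ℕ) (hk : 1 ≤ k) (L : ℕ) (s : Fin L → ℕ) (m n : Fin L → ℕ)
    (w : ((p : Fin L) × (Fin (m p) ⊕ Fin (n p))) → ℕ)
    (hsum0 : ∀ p : Fin L, ∑ t : Fin (m p), w ⟨p, Sum.inl t⟩ = s p)
    (hsum1 : ∀ p : Fin L, ∑ t : Fin (n p), w ⟨p, Sum.inr t⟩ = s p)
    (M : Finset (((p : Fin L) × (Fin (m p) ⊕ Fin (n p))) ×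
                 ((p : Fin L) × (Fin (m p) ⊕ Fin (n p)))))
    (hne : ∀ e ∈ M, e.1 ≠ e.2)
    (hdisj : ∀ e ∈ M, ∀ e' ∈ M, e ≠ e' →
      e.1 ≠ e'.1 ∧ e.1 ≠ e'.2 ∧ e.2 ≠ e'.1 ∧ e.2 ≠ e'.2) :
    ∑ p : Fin L, s p / k ≥ ∑ e ∈ M, min (w e.1) (w e.2) / k := by
  classical
  have key : 2 * ∑ e ∈ M, min (w e.1) (w e.2) / k ≤ 2 * ∑ p : Fin L, s p / k := by
    calc 2 * ∑ e ∈ M, min (w e.1) (w e.2) / k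
        = ∑ e ∈ M, ∑ a : ((p : Fin L) × (Fin (m p) ⊕ Fin (n p))), (if e.1 = a ∨ e.2 = a then min (w e.1) (w e.2) / k else 0) := by
          rw [Finset.mul_sum]
          refine Finset.sum_congr rfl fun e he => ?_
          have : ∀ a : ((p : Fin L) × (Fin (m p) ⊕ Fin (n p))), (e.1 = a ∨ e.2 = a) ↔ a ∈ ({e.1, e.2} : Finset ((p : Fin L) × (Fin (m p) ⊕ Fin (n p)))) := by
            intro a; simp [eq_comm]
          simp only [this]
          rw [Finset.sum_ite_mem, Finset.univ_inter, Finset.sum_const,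
            Finset.card_pair (hne e he), smul_eq_mul]
      _ = ∑ a : ((p : Fin L) × (Fin (m p) ⊕ Fin (n p))), ∑ e ∈ M, (if e.1 = a ∨ e.2 = a then min (w e.1) (w e.2) / k else 0) :=
          Finset.sum_comm
      _ ≤ ∑ a : ((p : Fin L) × (Fin (m p) ⊕ Fin (n p))), w a / k := by
          refine Finset.sum_le_sum fun a _ => ?_
          rw [Finset.sum_ite, Finset.sum_const_zero, add_zero]
          set S := M.filter (fun e => e.1 = a ∨ e.2 = a) with hS
          have hcard : S.card ≤ 1 := by
            rw [Finset.card_le_one]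
            intro e he e' he'
            simp only [hS, Finset.mem_filter] at he he'
            by_contra hee
            obtain ⟨h1, h2, h3, h4⟩ := hdisj e he.1 e' he'.1 hee
            rcases he.2 with h | h <;> rcases he'.2 with h' | h'
            · exact h1 (h.trans h'.symm)
            · exact h2 (h.trans h'.symm)
            · exact h3 (h.trans h'.symm)
            · exact h4 (h.trans h'.symm)
          rcases S.eq_empty_or_nonempty with h | ⟨x, hx⟩
          · simp [h]
          · have h : S = {x} :=
              Finset.eq_singleton_iff_unique_mem.mpr
                ⟨hx, fun b hb => Finset.card_le_one.mp hcard b hb x hx⟩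
            rw [h, Finset.sum_singleton]
            have hxS := hx
            simp only [hS, Finset.mem_filter] at hxS
            refine Nat.div_le_div_right ?_
            rcases hxS.2 with h' | h'
            · calc min (w x.1) (w x.2) ≤ w x.1 := min_le_left _ _
                _ = w a := by rw [h']
            · calc min (w x.1) (w x.2) ≤ w x.2 := min_le_right _ _
                _ = w a := by rw [h']
      _ ≤ 2 * ∑ p : Fin L, s p / k := by
          have hsig : ∑ a : (p : Fin L) × (Fin (m p) ⊕ Fin (n p)), w a / k
              = ∑ p : Fin L, ∑ x : Fin (m p) ⊕ Fin (n p), w ⟨p, x⟩ / k := by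
            rw [← Finset.univ_sigma_univ, Finset.sum_sigma]
          rw [hsig]
          have : ∀ p : Fin L, ∑ x : Fin (m p) ⊕ Fin (n p), w ⟨p, x⟩ / k ≤ 2 * (s p / k) := by
            intro p
            rw [Fintype.sum_sum_type, two_mul]
            refine Nat.add_le_add ?_ ?_
            · calc ∑ t : Fin (m p), w ⟨p, Sum.inl t⟩ / k
                  ≤ (∑ t : Fin (m p), w ⟨p, Sum.inl t⟩) / k :=
                    sum_div_le_div_sum _ _ _ hk
                _ = s p / k := by rw [hsum0 p]
            · calc ∑ t : Fin (n p), w ⟨p, Sum.inr t⟩ / k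
                  ≤ (∑ t : Fin (n p), w ⟨p, Sum.inr t⟩) / k :=
                    sum_div_le_div_sum _ _ _ hk
                _ = s p / k := by rw [hsum1 p]
          calc ∑ p : Fin L, ∑ x : Fin (m p) ⊕ Fin (n p), w ⟨p, x⟩ / k
              ≤ ∑ p : Fin L, 2 * (s p / k) := Finset.sum_le_sum fun p _ => this p
            _ = 2 * ∑ p : Fin L, s p / k := by rw [Finset.mul_sum]
  exact Nat.le_of_mul_le_mul_left key (by norm_num)
end

section
/- Let L ≥ 0 and for each p let s_p ≥ 0, with two tuples of natural numbers each summing to s_p as above, and let M be a set of pairwise disjoint unordered pairs of positions. Then the element (∏_{p=1}^{L} {s_p}_q!) · (∏_{{a,b}∈M} {min(i_a,i_b)}_q!)^{-1} of ℚ(q) lies in ℤ[q,q^{-1}]. -/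
open Polynomial Finset

noncomputable def qfact' (n : ℕ) : Polynomial ℤ := ∏ t ∈ range n, (X ^ (t+1) - 1)

lemma qfact'_eq (n : ℕ) : qfact' n = ∏ d ∈ Ioc 0 n, cyclotomic d ℤ ^ (n / d) := by
  have h1 : qfact' n = ∏ t ∈ Ioc 0 n, ((X : Polynomial ℤ) ^ t - 1) := by
    rw [qfact']
    rw [Finset.prod_bij (fun t _ => t + 1)]
    · intro a ha; simp [Finset.mem_Ioc] at *; omega
    · intro a ha b hb h; omega
    · intro b hb; simp [Finset.mem_Ioc] at hb; exact ⟨b - 1, by simp; omega, by omega⟩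
    · intro a ha; rfl
  rw [h1]
  have h2 : ∀ t ∈ Ioc 0 n, ((X : Polynomial ℤ) ^ t - 1) =
      ∏ d ∈ Ioc 0 n, if d ∣ t then cyclotomic d ℤ else 1 := by
    intro t ht
    simp only [Finset.mem_Ioc] at ht
    rw [← prod_cyclotomic_eq_X_pow_sub_one ht.1, ← Finset.prod_filter]
    congr 1
    ext d
    simp only [Nat.mem_divisors, Finset.mem_filter, Finset.mem_Ioc]
    constructor
    · rintro ⟨hd, ht0⟩
      exact ⟨⟨Nat.pos_of_dvd_of_pos hd ht.1, le_trans (Nat.le_of_dvd ht.1 hd) ht.2⟩, hd⟩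
    · rintro ⟨_, hd⟩; exact ⟨hd, by omega⟩
  rw [Finset.prod_congr rfl h2, Finset.prod_comm]
  refine Finset.prod_congr rfl fun d hd => ?_
  rw [← Finset.prod_filter, Finset.prod_const, Nat.Ioc_filter_dvd_card_eq_div]

lemma qfact'_eq_of_le {n K : ℕ} (h : n ≤ K) :
    qfact' n = ∏ d ∈ Ioc 0 K, cyclotomic d ℤ ^ (n / d) := by
  rw [qfact'_eq, ← Finset.prod_Ioc_consecutive _ (Nat.zero_le n) h]
  have : ∀ d ∈ Ioc n K, cyclotomic d ℤ ^ (n / d) = 1 := by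
    intro d hd
    simp only [Finset.mem_Ioc] at hd
    rw [Nat.div_eq_of_lt hd.1, pow_zero]
  rw [Finset.prod_congr rfl this, Finset.prod_const_one, mul_one]

set_option maxHeartbeats 1000000

lemma sum_div_le'' {α} (s : Finset α) (a : α → ℕ) (d : ℕ) :
    ∑ i ∈ s, a i / d ≤ (∑ i ∈ s, a i) / d := by
  induction s using Finset.cons_induction with
  | empty => simp
  | cons x s hx ih =>
    rw [Finset.sum_cons, Finset.sum_cons]
    exact le_trans (Nat.add_le_add_left ih _) (Nat.add_div_le_add_div _ _ _)

/-- With the same setup as the pairing inequality: `L` groups, the `p`-th group carrying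
two tuples of natural-number weights each summing to `s p`, and `M` a set of pairwise
disjoint (unordered) pairs of positions, the element
`(∏_p {s_p}_q!) · (∏_{{a,b} ∈ M} {min(w a, w b)}_q!)⁻¹` of `ℚ(q)` lies in `ℤ[q,q⁻¹]`,
where `{n}_q! = ∏_{t=1}^{n} (q^t − 1)`. -/
theorem prod_qfactorial_div_prod_min_qfactorial_mem_laurent
    (L : ℕ) (s : Fin L → ℕ) (m n : Fin L → ℕ)
    (w : ((p : Fin L) × (Fin (m p) ⊕ Fin (n p))) → ℕ)
    (hsum0 : ∀ p : Fin L, ∑ t : Fin (m p), w ⟨p, Sum.inl t⟩ = s p)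
    (hsum1 : ∀ p : Fin L, ∑ t : Fin (n p), w ⟨p, Sum.inr t⟩ = s p)
    (M : Finset (((p : Fin L) × (Fin (m p) ⊕ Fin (n p))) ×
                 ((p : Fin L) × (Fin (m p) ⊕ Fin (n p)))))
    (hne : ∀ e ∈ M, e.1 ≠ e.2)
    (hdisj : ∀ e ∈ M, ∀ e' ∈ M, e ≠ e' →
      e.1 ≠ e'.1 ∧ e.1 ≠ e'.2 ∧ e.2 ≠ e'.1 ∧ e.2 ≠ e'.2) :
    (∏ p : Fin L, ∏ t ∈ Finset.range (s p), ((RatFunc.X : RatFunc ℚ) ^ (t + 1) - 1)) /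
      (∏ e ∈ M, ∏ t ∈ Finset.range (min (w e.1) (w e.2)),
        ((RatFunc.X : RatFunc ℚ) ^ (t + 1) - 1)) ∈
      Algebra.adjoin ℤ ({RatFunc.X, RatFunc.X⁻¹} : Set (RatFunc ℚ)) := by
  classical
  -- weight bounded by group sum
  have hw : ∀ x : ((p : Fin L) × (Fin (m p) ⊕ Fin (n p))), w x ≤ s x.1 := by
    rintro ⟨p, x | x⟩
    · rw [← hsum0 p]
      exact Finset.single_le_sum (f := fun t => w ⟨p, Sum.inl t⟩) (fun _ _ => Nat.zero_le _)
        (Finset.mem_univ x)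
    · rw [← hsum1 p]
      exact Finset.single_le_sum (f := fun t => w ⟨p, Sum.inr t⟩) (fun _ _ => Nat.zero_le _)
        (Finset.mem_univ x)
  have hsB : ∀ p, s p ≤ ∑ p, s p := fun p =>
    Finset.single_le_sum (fun _ _ => Nat.zero_le _) (Finset.mem_univ p)
  have hmB : ∀ e ∈ M, min (w e.1) (w e.2) ≤ ∑ p, s p := fun e _ =>
    le_trans (le_trans (min_le_left _ _) (hw e.1)) (hsB _)
  -- key counting inequality
  have hcount : ∀ d : ℕ, ∑ e ∈ M, min (w e.1) (w e.2) / d ≤ ∑ p, s p / d := by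
    intro d
    rcases Nat.eq_zero_or_pos d with rfl | hd
    · simp
    have hmin : ∀ e ∈ M, min (w e.1) (w e.2) / d = min (w e.1 / d) (w e.2 / d) := by
      intro e _
      rcases le_total (w e.1) (w e.2) with h | h
      · rw [min_eq_left h, min_eq_left (Nat.div_le_div_right h)]
      · rw [min_eq_right h, min_eq_right (Nat.div_le_div_right h)]
    have hend : ∑ e ∈ M, (w e.1 / d + w e.2 / d) ≤
        ∑ x : ((p : Fin L) × (Fin (m p) ⊕ Fin (n p))), w x / d := by
      have hpd : (↑M : Set (((p : Fin L) × (Fin (m p) ⊕ Fin (n p))) ×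
            ((p : Fin L) × (Fin (m p) ⊕ Fin (n p))))).PairwiseDisjoint
          (fun e => ({e.1, e.2} : Finset ((p : Fin L) × (Fin (m p) ⊕ Fin (n p))))) := by
        intro e he e' he' hee'
        simp only [Finset.mem_coe] at he he'
        obtain ⟨h1, h2, h3, h4⟩ := hdisj e he e' he' hee'
        simp only [Function.onFun, Finset.disjoint_left, Finset.mem_insert,
          Finset.mem_singleton]
        rintro a ha hb
        rcases ha with rfl | rfl <;> rcases hb with h | h
        · exact h1 h
        · exact h2 h
        · exact h3 h
        · exact h4 h
      calc ∑ e ∈ M, (w e.1 / d + w e.2 / d)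
          = ∑ e ∈ M, ∑ x ∈ ({e.1, e.2} :
              Finset ((p : Fin L) × (Fin (m p) ⊕ Fin (n p)))), w x / d := by
            refine Finset.sum_congr rfl fun e he => ?_
            rw [Finset.sum_pair (hne e he)]
        _ = ∑ x ∈ M.biUnion (fun e => ({e.1, e.2} :
              Finset ((p : Fin L) × (Fin (m p) ⊕ Fin (n p))))), w x / d :=
            (Finset.sum_biUnion hpd).symm
        _ ≤ ∑ x : ((p : Fin L) × (Fin (m p) ⊕ Fin (n p))), w x / d :=
            Finset.sum_le_sum_of_subset (Finset.subset_univ _)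
    have hall : ∑ x : ((p : Fin L) × (Fin (m p) ⊕ Fin (n p))), w x / d ≤
        ∑ p, 2 * (s p / d) := by
      rw [show (Finset.univ : Finset ((p : Fin L) × (Fin (m p) ⊕ Fin (n p)))) =
        Finset.univ.sigma (fun _ => Finset.univ) from rfl, Finset.sum_sigma]
      refine Finset.sum_le_sum fun p _ => ?_
      rw [Fintype.sum_sum_type]
      have i1 : ∑ t : Fin (m p), w ⟨p, Sum.inl t⟩ / d ≤ s p / d := by
        calc ∑ t : Fin (m p), w ⟨p, Sum.inl t⟩ / d
            ≤ (∑ t : Fin (m p), w ⟨p, Sum.inl t⟩) / d := sum_div_le'' _ _ _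
          _ = s p / d := by rw [hsum0 p]
      have i2 : ∑ t : Fin (n p), w ⟨p, Sum.inr t⟩ / d ≤ s p / d := by
        calc ∑ t : Fin (n p), w ⟨p, Sum.inr t⟩ / d
            ≤ (∑ t : Fin (n p), w ⟨p, Sum.inr t⟩) / d := sum_div_le'' _ _ _
          _ = s p / d := by rw [hsum1 p]
      omega
    have h2min : ∀ e ∈ M, 2 * (min (w e.1) (w e.2) / d) ≤ w e.1 / d + w e.2 / d := by
      intro e he
      rw [hmin e he]
      rcases le_total (w e.1 / d) (w e.2 / d) with h | h
      · rw [min_eq_left h]; omega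
      · rw [min_eq_right h]; omega
    have key : 2 * ∑ e ∈ M, min (w e.1) (w e.2) / d ≤ 2 * ∑ p, s p / d := by
      calc 2 * ∑ e ∈ M, min (w e.1) (w e.2) / d
          = ∑ e ∈ M, 2 * (min (w e.1) (w e.2) / d) := by rw [Finset.mul_sum]
        _ ≤ ∑ e ∈ M, (w e.1 / d + w e.2 / d) := Finset.sum_le_sum h2min
        _ ≤ _ := le_trans hend hall
        _ = 2 * ∑ p, s p / d := by rw [Finset.mul_sum]
    omega
  -- polynomial divisibility
  set B := ∑ p, s p with hBdef
  have hN : (∏ p, qfact' (s p)) =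
      ∏ d ∈ Ioc 0 B, cyclotomic d ℤ ^ (∑ p, s p / d) := by
    rw [Finset.prod_congr rfl fun p _ => qfact'_eq_of_le (hsB p), Finset.prod_comm]
    exact Finset.prod_congr rfl fun d _ => by rw [Finset.prod_pow_eq_pow_sum]
  have hD : (∏ e ∈ M, qfact' (min (w e.1) (w e.2))) =
      ∏ d ∈ Ioc 0 B, cyclotomic d ℤ ^ (∑ e ∈ M, min (w e.1) (w e.2) / d) := by
    rw [Finset.prod_congr rfl fun e he => qfact'_eq_of_le (hmB e he), Finset.prod_comm]
    exact Finset.prod_congr rfl fun d _ => by rw [Finset.prod_pow_eq_pow_sum]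
  have hdvd : (∏ e ∈ M, qfact' (min (w e.1) (w e.2))) ∣ ∏ p, qfact' (s p) := by
    rw [hN, hD]
    exact Finset.prod_dvd_prod_of_dvd _ _ fun d _ => pow_dvd_pow _ (hcount d)
  obtain ⟨C, hC⟩ := hdvd
  -- transfer to RatFunc
  set φ : Polynomial ℤ →ₐ[ℤ] RatFunc ℚ := Polynomial.aeval RatFunc.X with hφ
  have hnum : (∏ p : Fin L, ∏ t ∈ Finset.range (s p),
      ((RatFunc.X : RatFunc ℚ) ^ (t + 1) - 1)) = φ (∏ p, qfact' (s p)) := by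
    simp [qfact', map_prod, hφ]
  have hden : (∏ e ∈ M, ∏ t ∈ Finset.range (min (w e.1) (w e.2)),
      ((RatFunc.X : RatFunc ℚ) ^ (t + 1) - 1)) =
      φ (∏ e ∈ M, qfact' (min (w e.1) (w e.2))) := by
    simp [qfact', map_prod, hφ]
  have hfac : ∀ k : ℕ, ((RatFunc.X : RatFunc ℚ) ^ (k + 1) - 1) ≠ 0 := by
    intro k
    have hinj : Function.Injective (algebraMap (Polynomial ℚ) (RatFunc ℚ)) :=
      IsFractionRing.injective _ _
    have : ((RatFunc.X : RatFunc ℚ) ^ (k + 1) - 1) =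
        algebraMap (Polynomial ℚ) (RatFunc ℚ) (X ^ (k + 1) - 1) := by
      rw [map_sub, map_pow, map_one, RatFunc.algebraMap_X]
    rw [this]
    intro h
    have h0 : ((X : Polynomial ℚ) ^ (k + 1) - 1) ≠ 0 := by
      have := Polynomial.X_pow_sub_C_ne_zero (Nat.succ_pos k) (1 : ℚ)
      simpa using this
    exact h0 (hinj (by rw [h, map_zero]))
  have hden0 : (∏ e ∈ M, ∏ t ∈ Finset.range (min (w e.1) (w e.2)),
      ((RatFunc.X : RatFunc ℚ) ^ (t + 1) - 1)) ≠ 0 := by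
    rw [Finset.prod_ne_zero_iff]
    intro e _
    rw [Finset.prod_ne_zero_iff]
    intro t _
    exact hfac t
  have hquot : (∏ p : Fin L, ∏ t ∈ Finset.range (s p),
        ((RatFunc.X : RatFunc ℚ) ^ (t + 1) - 1)) /
      (∏ e ∈ M, ∏ t ∈ Finset.range (min (w e.1) (w e.2)),
        ((RatFunc.X : RatFunc ℚ) ^ (t + 1) - 1)) = φ C := by
    rw [hnum, hC, map_mul, ← hden, mul_comm, mul_div_assoc, div_self hden0, mul_one]
  rw [hquot, hφ]
  refine Algebra.adjoin_mono ?_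
    (Polynomial.aeval_mem_adjoin_singleton ℤ (RatFunc.X : RatFunc ℚ) (p := C))
  intro x hx
  simp only [Set.mem_singleton_iff] at hx
  subst hx
  exact Set.mem_insert _ _
end
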